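/- In the men-proposing Gale-Shapley algorithm, no man can be strictly better-off by unilaterally misreporting his preferences: if man m reports a false strict order while everyone else is truthful, he does not truly prefer his resulting partner to his truthful-run partner. -/

import Mathlib

namespace GS

/-- The `k` most-preferred elements of `S` according to the rank function `rank`
(lower rank = more preferred); if `S` has at most `k` elements this is all of `S`. -/
def topk {α : Type*} [DecidableEq α] (rank : α → ℕ) (k : ℕ) (S : Finset α) : Finset α :=
  S.filter fun a => (S.filter fun b => rank b < rank a).card < k

/-- An instance of the stable-matching problem with `n` women and `n` men.
`mpref m w` is the rank man `m` assigns to woman `w` (lower = more preferred),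
and `wpref w m` is the rank woman `w` assigns to man `m`. -/
structure Instance (n : ℕ) where
  mpref : Fin n → Fin n → ℕ
  wpref : Fin n → Fin n → ℕ
  mprefInj : ∀ m, Function.Injective (mpref m)
  wprefInj : ∀ w, Function.Injective (wpref w)

variable {n : ℕ}

/-- `prefers p a b` : `a` is strictly preferred to `b` under rank function `p`. -/
def prefers (p : Fin n → ℕ) (a b : Fin n) : Prop := p a < p b

/-- Given the current state `avail m` (the women who have not yet rejected man `m`),
the set of women man `m` proposes to tonight: his most-preferred available woman
(a singleton, or empty if no woman is available). -/
def proposals (I : Instance n) (avail : Fin n → Finset (Fin n)) (m : Fin n) :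
    Finset (Fin n) := topk (I.mpref m) 1 (avail m)

/-- The men proposing to woman `w` tonight. -/
def proposersOf (I : Instance n) (avail : Fin n → Finset (Fin n)) (w : Fin n) :
    Finset (Fin n) := Finset.univ.filter fun m => w ∈ proposals I avail m

/-- The men rejected by woman `w` tonight: all of tonight's proposers except
her most-preferred one. -/
def rejectedBy (I : Instance n) (avail : Fin n → Finset (Fin n)) (w : Fin n) :
    Finset (Fin n) := proposersOf I avail w \ topk (I.wpref w) 1 (proposersOf I avail w)

/-- One night of the men-proposing Gale-Shapley algorithm. -/
def step (I : Instance n) (avail : Fin n → Finset (Fin n)) :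
    Fin n → Finset (Fin n) :=
  fun m => (avail m).filter fun w => m ∉ rejectedBy I avail w

/-- `nights I t m` : the set of women who have not rejected man `m` before night `t`
(initially all women). -/
def nights (I : Instance n) (t : ℕ) : Fin n → Finset (Fin n) :=
  (step I)^[t] (fun _ => Finset.univ)

/-- The algorithm has terminated by night `T`: no man is rejected on night `T`. -/
def Stopped (I : Instance n) (T : ℕ) : Prop := step I (nights I T) = nights I T

/-- On night `T`, each man `m` serenades exactly under the window of `μ m`. -/
def MatchesAt (I : Instance n) (T : ℕ) (μ : Fin n ≃ Fin n) : Prop :=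
  ∀ m, proposals I (nights I T) m = {μ m}

/-- The bijection `μ` (from men to women) is the outcome of the men-proposing
Gale-Shapley algorithm on instance `I`: for some night `T` no rejection occurs and
every man `m` is matched with `μ m`. -/
def IsGSMatching (I : Instance n) (μ : Fin n ≃ Fin n) : Prop :=
  ∃ T, Stopped I T ∧ MatchesAt I T μ

/-- Stability of a matching `μ` (men to women): there is no unmatched pair `(w, m)`
each of whom strictly prefers the other to their partner under `μ`. -/
def Stable (I : Instance n) (μ : Fin n ≃ Fin n) : Prop :=
  ¬ ∃ m w, μ m ≠ w ∧ I.mpref m w < I.mpref m (μ m) ∧ I.wpref w m < I.wpref w (μ.symm w)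

/-- The instance in which the women in `L` replace their true preferences by the
false preference rankings `f`, everyone else being truthful. -/
def liarInstance (I : Instance n) (L : Finset (Fin n))
    (f : Fin n → Fin n → ℕ) (hf : ∀ w, Function.Injective (f w)) : Instance n where
  mpref := I.mpref
  wpref := fun w => if w ∈ L then f w else I.wpref w
  mprefInj := I.mprefInj
  wprefInj := fun w => by split_ifs; exacts [hf w, I.wprefInj w]

end GS

namespace GS

/-- The instance in which the single man `m₀` replaces his true preference ranking
by the false ranking `f`, everyone else being truthful. -/
def manLiarInstance {n : ℕ} (I : Instance n) (m₀ : Fin n)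
    (f : Fin n → ℕ) (hf : Function.Injective f) : Instance n where
  mpref := fun m => if m = m₀ then f else I.mpref m
  wpref := I.wpref
  mprefInj := fun m => by split_ifs; exacts [hf, I.mprefInj m]
  wprefInj := I.wprefInj

end GS

/-!
Blocking lemma (Gale–Sotomayor): if the set `M'` of men who strictly prefer a matching `ν` to
the Gale–Shapley matching `O` is nonempty, then `ν` is blocked by a pair whose man is outside
`M'`. If `ν` and `O` give `M'` different sets of partners, stability of `O` yields such a pair.
Otherwise let `tS` be the first night on which every man of `M'` proposes to his `O`-partner,
and `mh ∈ M'` one who did not the night before. His partner `wh` is `ν`-matched to some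
`m₁ ∈ M'`, who prefers her to his `O`-partner, so she rejected him before night `tS`; hence the
man `ms` she holds on night `tS - 1` is better than `m₁` for her. On night `tS` she holds `mh`,
whom she never rejects, and rejects `ms`; so `ms` is not proposing to his `O`-partner then,
is outside `M'`, and blocks `ν` together with `wh`.

For `ν = N`, the liar `m₀` lies in `M'`, so the blocking pair involves a truthful man and blocks
`N` also under the reported preferences, contradicting the stability of the Gale–Shapley outcome.
-/

namespace GS

section Topk

variable {α : Type*} [DecidableEq α] {rank : α → ℕ} {S T : Finset α} {a b : α}

lemma mem_topk_one : a ∈ topk rank 1 S ↔ a ∈ S ∧ ∀ b ∈ S, ¬ rank b < rank a := by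
  simp [topk, Finset.card_eq_zero, Finset.filter_eq_empty_iff]

lemma topk_subset (k : ℕ) : topk rank k S ⊆ S := Finset.filter_subset _ _

lemma eq_of_mem_topk_one (hinj : Function.Injective rank) (ha : a ∈ topk rank 1 S)
    (hb : b ∈ topk rank 1 S) : a = b := by
  rw [mem_topk_one] at ha hb
  exact hinj (le_antisymm (not_lt.1 (ha.2 b hb.1)) (not_lt.1 (hb.2 a ha.1)))

lemma exists_mem_topk_one_le (ha : a ∈ S) : ∃ b ∈ topk rank 1 S, rank b ≤ rank a := by
  obtain ⟨b, hb, hmin⟩ := S.exists_min_image rank ⟨a, ha⟩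
  exact ⟨b, mem_topk_one.2 ⟨hb, fun c hc => not_lt.2 (hmin c hc)⟩, hmin a ha⟩

lemma mem_topk_one_of_subset (ha : a ∈ topk rank 1 S) (haT : a ∈ T) (hTS : T ⊆ S) :
    a ∈ topk rank 1 T :=
  mem_topk_one.2 ⟨haT, fun b hb => (mem_topk_one.1 ha).2 b (hTS hb)⟩

end Topk

variable {n : ℕ}

def heldBy (I : Instance n) (av : Fin n → Finset (Fin n)) (w : Fin n) : Finset (Fin n) :=
  topk (I.wpref w) 1 (proposersOf I av w)

def IsBlockingPair (I : Instance n) (μ : Fin n ≃ Fin n) (m w : Fin n) : Prop :=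
  μ m ≠ w ∧ I.mpref m w < I.mpref m (μ m) ∧ I.wpref w m < I.wpref w (μ.symm w)

section Night

variable {I : Instance n} {av av' : Fin n → Finset (Fin n)} {m w : Fin n}

lemma mem_proposals :
    w ∈ proposals I av m ↔ w ∈ av m ∧ ∀ w' ∈ av m, ¬ I.mpref m w' < I.mpref m w :=
  mem_topk_one

lemma eq_of_mem_proposals {w' : Fin n} (hw : w ∈ proposals I av m)
    (hw' : w' ∈ proposals I av m) : w = w' :=
  eq_of_mem_topk_one (I.mprefInj m) hw hw'

lemma mem_proposals_of_subset (hw : w ∈ proposals I av m) (hw' : w ∈ av' m)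
    (hsub : av' m ⊆ av m) : w ∈ proposals I av' m :=
  mem_topk_one_of_subset hw hw' hsub

lemma mem_proposersOf : m ∈ proposersOf I av w ↔ w ∈ proposals I av m := by
  simp [proposersOf]

lemma mem_proposals_of_mem_heldBy (h : m ∈ heldBy I av w) : w ∈ proposals I av m :=
  mem_proposersOf.1 (topk_subset 1 h)

lemma exists_heldBy_lt_of_mem_rejectedBy (h : m ∈ rejectedBy I av w) :
    ∃ b ∈ heldBy I av w, I.wpref w b < I.wpref w m := by
  obtain ⟨hm, hnot⟩ := Finset.mem_sdiff.1 h
  obtain ⟨b', hb', hlt⟩ : ∃ b' ∈ proposersOf I av w, I.wpref w b' < I.wpref w m := by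
    by_contra! hc
    exact hnot (mem_topk_one.2 ⟨hm, fun b' hb' => not_lt.2 (hc b' hb')⟩)
  obtain ⟨b, hb, hle⟩ := exists_mem_topk_one_le (rank := I.wpref w) hb'
  exact ⟨b, hb, hle.trans_lt hlt⟩

end Night

section Run

variable {I : Instance n} {m w : Fin n} {t : ℕ}

lemma nights_succ (t : ℕ) : nights I (t + 1) = step I (nights I t) :=
  Function.iterate_succ_apply' _ _ _

lemma mem_nights_succ :
    w ∈ nights I (t + 1) m ↔ w ∈ nights I t m ∧ m ∉ rejectedBy I (nights I t) w := by
  rw [nights_succ]; exact Finset.mem_filter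

lemma nights_antitone (I : Instance n) (m : Fin n) : Antitone fun t => nights I t m :=
  antitone_nat_of_succ_le fun _ _ hw => (mem_nights_succ.1 hw).1

lemma mem_heldBy_of_mem_nights_succ (hw : w ∈ proposals I (nights I t) m)
    (hw' : w ∈ nights I (t + 1) m) : m ∈ heldBy I (nights I t) w := by
  by_contra h
  exact (mem_nights_succ.1 hw').2 (Finset.mem_sdiff.2 ⟨mem_proposersOf.2 hw, h⟩)

lemma mem_proposals_succ_of_mem_heldBy (h : m ∈ heldBy I (nights I t) w) :
    w ∈ proposals I (nights I (t + 1)) m := by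
  have hw := mem_proposals_of_mem_heldBy h
  refine mem_proposals_of_subset hw ?_ (nights_antitone I m t.le_succ)
  exact mem_nights_succ.2 ⟨(mem_proposals.1 hw).1, fun hrej => (Finset.mem_sdiff.1 hrej).2 h⟩

lemma exists_heldBy_lt_of_not_mem_nights_succ :
    ∀ {t : ℕ}, w ∉ nights I (t + 1) m →
      ∃ b ∈ heldBy I (nights I t) w, I.wpref w b < I.wpref w m
  | 0, hw => by
    refine exists_heldBy_lt_of_mem_rejectedBy (by_contra fun hrej => hw ?_)
    exact mem_nights_succ.2 ⟨Finset.mem_univ w, hrej⟩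
  | t + 1, hw => by
    by_cases hwt : w ∈ nights I (t + 1) m
    · exact exists_heldBy_lt_of_mem_rejectedBy
        (by_contra fun hrej => hw (mem_nights_succ.2 ⟨hwt, hrej⟩))
    · obtain ⟨b, hb, hlt⟩ := exists_heldBy_lt_of_not_mem_nights_succ hwt
      have hb' := mem_proposersOf.2 (mem_proposals_succ_of_mem_heldBy hb)
      obtain ⟨c, hc, hle⟩ := exists_mem_topk_one_le (rank := I.wpref w) hb'
      exact ⟨c, hc, hle.trans_lt hlt⟩

end Run

section Outcome

variable {I : Instance n} {T : ℕ} {μ : Fin n ≃ Fin n} {m w : Fin n} {t : ℕ}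

lemma mem_proposals_of_matchesAt (hma : MatchesAt I T μ) (m : Fin n) :
    μ m ∈ proposals I (nights I T) m := by
  rw [hma m]; exact Finset.mem_singleton_self _

lemma nights_eq_of_le (hst : Stopped I T) (h : T ≤ t) : nights I t = nights I T := by
  induction t, h using Nat.le_induction with
  | base => rfl
  | succ t _ ih => rw [nights_succ, ih, hst]

lemma final_mem_nights (hst : Stopped I T) (hma : MatchesAt I T μ) (m : Fin n) (t : ℕ) :
    μ m ∈ nights I t m := by
  have hT := (mem_proposals.1 (mem_proposals_of_matchesAt hma m)).1
  rcases le_total t T with h | h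
  · exact nights_antitone I m h hT
  · rwa [nights_eq_of_le hst h]

lemma mpref_lt_of_mem_proposals (hst : Stopped I T) (hma : MatchesAt I T μ)
    (hw : w ∈ proposals I (nights I t) m) (hne : w ≠ μ m) :
    I.mpref m w < I.mpref m (μ m) :=
  (not_lt.1 ((mem_proposals.1 hw).2 _ (final_mem_nights hst hma m t))).lt_of_ne
    ((I.mprefInj m).ne hne)

lemma stable_of_matchesAt (hma : MatchesAt I T μ) : Stable I μ := by
  rintro ⟨m, w, -, hm, hw⟩
  have hwT : w ∉ nights I T m := fun h =>
    (mem_proposals.1 (mem_proposals_of_matchesAt hma m)).2 w h hm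
  obtain _ | t := T
  · exact hwT (Finset.mem_univ w)
  obtain ⟨b, hb, hlt⟩ := exists_heldBy_lt_of_not_mem_nights_succ hwT
  have hbw : w = μ b := by
    simpa [hma b] using mem_proposals_succ_of_mem_heldBy hb
  subst hbw
  rw [Equiv.symm_apply_apply] at hw
  exact (hlt.trans hw).false

lemma IsGSMatching.stable (h : IsGSMatching I μ) : Stable I μ :=
  stable_of_matchesAt h.choose_spec.2

end Outcome

section Blocking

variable {I : Instance n} {O : Fin n ≃ Fin n} (ν : Fin n ≃ Fin n) {M' : Finset (Fin n)}

lemma exists_isBlockingPair_of_image_ne (hO : Stable I O)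
    (hM' : ∀ m, m ∈ M' ↔ I.mpref m (ν m) < I.mpref m (O m))
    (himg : M'.image ν ≠ M'.image O) : ∃ m ∉ M', ∃ w, IsBlockingPair I ν m w := by
  have hsub : ¬ M'.image ν ⊆ M'.image O := fun hsub =>
    himg (Finset.eq_of_subset_of_card_le hsub (by
      rw [Finset.card_image_of_injective _ ν.injective,
        Finset.card_image_of_injective _ O.injective]))
  obtain ⟨w, hwν, hwO⟩ := Finset.not_subset.1 hsub
  obtain ⟨m', hm', rfl⟩ := Finset.mem_image.1 hwν
  set m := O.symm (ν m')
  have hOm : O m = ν m' := O.apply_symm_apply _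
  have hm : m ∉ M' := fun hm => hwO (Finset.mem_image.2 ⟨m, hm, hOm⟩)
  have hmm' : m ≠ m' := fun h => hm (h ▸ hm')
  have hwm' : ¬ I.wpref (ν m') m' < I.wpref (ν m') m := fun hlt =>
    hO ⟨m', ν m', fun h => hwO (Finset.mem_image.2 ⟨m', hm', h⟩), (hM' m').1 hm', hlt⟩
  refine ⟨m, hm, ν m', ν.injective.ne hmm', ?_, ?_⟩
  · rw [← hOm]
    exact (not_lt.1 (mt (hM' m).2 hm)).lt_of_ne
      ((I.mprefInj m).ne (by rw [hOm]; exact ν.injective.ne hmm'.symm))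
  · rw [Equiv.symm_apply_apply]
    exact (not_lt.1 hwm').lt_of_ne ((I.wprefInj _).ne hmm')

lemma exists_isBlockingPair_of_image_eq {T : ℕ} (hst : Stopped I T) (hma : MatchesAt I T O)
    (hM' : ∀ m, m ∈ M' ↔ I.mpref m (ν m) < I.mpref m (O m)) (hne : M'.Nonempty)
    (himg : M'.image ν = M'.image O) : ∃ m ∉ M', ∃ w, IsBlockingPair I ν m w := by
  have hP : ∃ t, ∀ m ∈ M', O m ∈ proposals I (nights I t) m :=
    ⟨T, fun m _ => mem_proposals_of_matchesAt hma m⟩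
  set tS := Nat.find hP
  have hPS : ∀ m ∈ M', O m ∈ proposals I (nights I tS) m := Nat.find_spec hP
  have htS : tS ≠ 0 := by
    intro h0
    obtain ⟨m, hm⟩ := hne
    exact (mem_proposals.1 (h0 ▸ hPS m hm)).2 (ν m) (Finset.mem_univ _) ((hM' m).1 hm)
  obtain ⟨mh, hmh, hmh_late⟩ : ∃ m ∈ M', O m ∉ proposals I (nights I (tS - 1)) m := by
    simpa using Nat.find_min hP (Nat.sub_one_lt htS)
  set wh := O mh
  obtain ⟨m₁, hm₁, hνm₁⟩ :=
    Finset.mem_image.1 (himg ▸ Finset.mem_image_of_mem O hmh : wh ∈ M'.image ν)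
  have hm₁_rej : wh ∉ nights I (tS - 1 + 1) m₁ := by
    rw [Nat.sub_add_cancel (Nat.pos_of_ne_zero htS)]
    exact fun hmem => (mem_proposals.1 (hPS m₁ hm₁)).2 wh hmem (hνm₁ ▸ (hM' m₁).1 hm₁)
  obtain ⟨ms, hms_held, hms_lt⟩ := exists_heldBy_lt_of_not_mem_nights_succ hm₁_rej
  have hms_prop : wh ∈ proposals I (nights I tS) ms := by
    simpa [Nat.sub_add_cancel (Nat.pos_of_ne_zero htS)] using
      mem_proposals_succ_of_mem_heldBy hms_held
  have hms_ne : ms ≠ mh := by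
    rintro rfl; exact hmh_late (mem_proposals_of_mem_heldBy hms_held)
  -- `wh` never rejects `mh`, so on night `tS` she holds `mh` and rejects `ms`.
  have hms_rej : wh ∉ nights I (tS + 1) ms := fun hmem =>
    hms_ne (eq_of_mem_topk_one (I.wprefInj wh) (mem_heldBy_of_mem_nights_succ hms_prop hmem)
      (mem_heldBy_of_mem_nights_succ (hPS mh hmh) (final_mem_nights hst hma mh _)))
  have hwh_ne : wh ≠ O ms := fun h => hms_rej (h ▸ final_mem_nights hst hma ms _)
  have hms : ms ∉ M' := fun hms => hwh_ne (eq_of_mem_proposals hms_prop (hPS ms hms))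
  refine ⟨ms, hms, wh, fun h => hms (ν.injective (h.trans hνm₁.symm) ▸ hm₁), ?_, ?_⟩
  · exact (mpref_lt_of_mem_proposals hst hma hms_prop hwh_ne).trans_le
      (not_lt.1 (mt (hM' ms).2 hms))
  · rwa [ν.symm_apply_eq.2 hνm₁.symm]

theorem exists_isBlockingPair_of_exists_lt (hO : IsGSMatching I O)
    (h : ∃ m, I.mpref m (ν m) < I.mpref m (O m)) :
    ∃ m, ¬ I.mpref m (ν m) < I.mpref m (O m) ∧ ∃ w, IsBlockingPair I ν m w := by
  obtain ⟨T, hst, hma⟩ := hO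
  set M' := Finset.univ.filter fun m => I.mpref m (ν m) < I.mpref m (O m)
  have hM' : ∀ m, m ∈ M' ↔ I.mpref m (ν m) < I.mpref m (O m) := by simp [M']
  obtain ⟨m, hm, w, hw⟩ : ∃ m ∉ M', ∃ w, IsBlockingPair I ν m w := by
    by_cases himg : M'.image ν = M'.image O
    · obtain ⟨m₀, hm₀⟩ := h
      exact exists_isBlockingPair_of_image_eq ν hst hma hM' ⟨m₀, (hM' m₀).2 hm₀⟩ himg
    · exact exists_isBlockingPair_of_image_ne ν (stable_of_matchesAt hma) hM' himg
  exact ⟨m, mt (hM' m).2 hm, w, hw⟩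

end Blocking

end GS

open GS in
/-- Dubins–Freedman: no man can obtain a strictly better partner by unilaterally
misreporting his preferences to the men-proposing Gale-Shapley mechanism. -/
theorem man_cannot_manipulate (n : ℕ) (I : GS.Instance n)
    (m₀ : Fin n) (f : Fin n → ℕ) (hf : Function.Injective f)
    (O N : Fin n ≃ Fin n)
    (hO : IsGSMatching I O) (hN : IsGSMatching (manLiarInstance I m₀ f hf) N) :
    ¬ prefers (I.mpref m₀) (N m₀) (O m₀) := by
  intro hpref
  obtain ⟨m, hm, w, hblock⟩ := exists_isBlockingPair_of_exists_lt N hO ⟨m₀, hpref⟩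
  have hm₀ : m ≠ m₀ := by rintro rfl; exact hm hpref
  have hJ : (manLiarInstance I m₀ f hf).mpref m = I.mpref m := if_neg hm₀
  exact hN.stable ⟨m, w, by rw [hJ]; exact hblock⟩
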